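/- Let d be a positive integer and let p be a real number with p > 4. Then for all x, y ∈ ℝ^d, the following second-order Taylor identity with integral remainder holds for the function z ↦ ‖z‖^p: ‖x‖^p − ‖y‖^p − p‖y‖^{p−2}⟨y, x − y⟩ = p(p−2) ∫₀¹ (1−θ)‖y + θ(x − y)‖^{p−4} ⟨y + θ(x − y), x − y⟩² dθ + p‖x − y‖² ∫₀¹ (1−θ)‖y + θ(x − y)‖^{p−2} dθ. (The key identity established in the proof of Lemma 3.2.) -/

import Mathlib

open scoped RealInnerProductSpace

/-!
Along the segment `θ ↦ y + θ • (x - y)` the function `φ θ = ‖y + θ • (x - y)‖ ^ p` is twice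
continuously differentiable when `p > 4`, because `z ↦ ‖z‖ ^ q` has gradient `q ‖z‖^(q-2) z`
for every `q > 1` (used with `q = p` and `q = p - 2`). The identity is then Taylor's formula
`φ 1 = φ 0 + φ' 0 + ∫₀¹ (1 - θ) φ'' θ dθ`, which is one integration by parts.
-/

theorem taylor_integral_remainder_two_of_hasDerivAt {g g' g'' : ℝ → ℝ} {a b : ℝ}
    (hg : ∀ t ∈ Set.uIcc a b, HasDerivAt g (g' t) t)
    (hg' : ∀ t ∈ Set.uIcc a b, HasDerivAt g' (g'' t) t)
    (hg'' : IntervalIntegrable g'' MeasureTheory.volume a b) :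
    g b - g a - (b - a) * g' a = ∫ t in a..b, (b - t) * g'' t := by
  have hg'_int : IntervalIntegrable g' MeasureTheory.volume a b :=
    ContinuousOn.intervalIntegrable fun t ht => (hg' t ht).continuousAt.continuousWithinAt
  have hsub : ∀ t ∈ Set.uIcc a b, HasDerivAt (fun s => b - s) (-1) t := fun t _ =>
    (hasDerivAt_id t).const_sub b
  rw [intervalIntegral.integral_mul_deriv_eq_deriv_mul hsub hg' intervalIntegrable_const hg'']
  simp only [neg_one_mul, intervalIntegral.integral_neg,
    intervalIntegral.integral_eq_sub_of_hasDerivAt hg hg'_int]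
  ring

section NormRpowAlongLine

variable {E : Type*} [NormedAddCommGroup E] [InnerProductSpace ℝ E] (y v : E) {q : ℝ}

theorem hasDerivAt_norm_add_smul_rpow (hq : 1 < q) (t : ℝ) :
    HasDerivAt (fun s : ℝ => ‖y + s • v‖ ^ q)
      (q * ‖y + t • v‖ ^ (q - 2) * ⟪y + t • v, v⟫) t := by
  have hline : HasDerivAt (fun s : ℝ => y + s • v) v t := by
    simpa using ((hasDerivAt_id t).smul_const v).const_add y
  refine ((hasFDerivAt_norm_rpow (y + t • v) hq).comp_hasDerivAt t hline).congr_deriv ?_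
  rw [smul_apply, innerSL_apply_apply, smul_eq_mul]

theorem hasDerivAt_inner_add_smul_left (t : ℝ) :
    HasDerivAt (fun s : ℝ => ⟪y + s • v, v⟫) (‖v‖ ^ 2) t := by
  have : (fun s : ℝ => ⟪y + s • v, v⟫) = fun s => ⟪y, v⟫ + s * ‖v‖ ^ 2 := by
    ext s
    rw [inner_add_left, real_inner_smul_left, real_inner_self_eq_norm_sq]
  rw [this]
  simpa using ((hasDerivAt_id t).mul_const (‖v‖ ^ 2)).const_add ⟪y, v⟫

theorem hasDerivAt_mul_norm_add_smul_rpow_mul_inner {p : ℝ} (hp : 3 < p) (t : ℝ) :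
    HasDerivAt (fun s : ℝ => p * ‖y + s • v‖ ^ (p - 2) * ⟪y + s • v, v⟫)
      (p * (p - 2) * ‖y + t • v‖ ^ (p - 4) * ⟪y + t • v, v⟫ ^ 2
        + p * ‖v‖ ^ 2 * ‖y + t • v‖ ^ (p - 2)) t := by
  refine (((hasDerivAt_norm_add_smul_rpow y v (q := p - 2) (by linarith) t).const_mul p).mul
    (hasDerivAt_inner_add_smul_left y v t)).congr_deriv ?_
  rw [show p - 2 - 2 = p - 4 by ring]
  ring

theorem continuous_norm_add_smul_rpow (hq : 0 ≤ q) : Continuous fun s : ℝ => ‖y + s • v‖ ^ q :=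
  (by fun_prop : Continuous fun s : ℝ => ‖y + s • v‖).rpow_const fun _ => Or.inr hq

end NormRpowAlongLine

theorem norm_rpow_taylor_identity_general (d : ℕ) (p : ℝ) (hp : 4 < p)
    (x y : EuclideanSpace ℝ (Fin d)) :
    ‖x‖ ^ p - ‖y‖ ^ p - p * ‖y‖ ^ (p - 2) * ⟪y, x - y⟫ =
      p * (p - 2) *
        (∫ θ in (0:ℝ)..1,
          (1 - θ) * ‖y + θ • (x - y)‖ ^ (p - 4) * ⟪y + θ • (x - y), x - y⟫ ^ 2)
      + p * ‖x - y‖ ^ 2 *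
        ∫ θ in (0:ℝ)..1, (1 - θ) * ‖y + θ • (x - y)‖ ^ (p - 2) := by
  set v := x - y
  have hcont4 := continuous_norm_add_smul_rpow y v (q := p - 4) (by linarith)
  have hcont2 := continuous_norm_add_smul_rpow y v (q := p - 2) (by linarith)
  have htaylor := taylor_integral_remainder_two_of_hasDerivAt (a := 0) (b := 1)
    (fun t _ => hasDerivAt_norm_add_smul_rpow y v (by linarith) t)
    (fun t _ => hasDerivAt_mul_norm_add_smul_rpow_mul_inner y v (by linarith) t)
    (Continuous.intervalIntegrable (by fun_prop) _ _)
  rw [← intervalIntegral.integral_const_mul, ← intervalIntegral.integral_const_mul,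
    ← intervalIntegral.integral_add (Continuous.intervalIntegrable (by fun_prop) _ _)
      (Continuous.intervalIntegrable (by fun_prop) _ _)]
  convert htaylor using 1
  · simp [v]
  · exact intervalIntegral.integral_congr fun t _ => by ring

/-- The key second-order Taylor identity with integral remainder for `z ↦ ‖z‖^p`
(established in the proof of Lemma 3.2): for `p > 4` and `x, y ∈ ℝ^d`,
`‖x‖^p − ‖y‖^p − p‖y‖^{p−2}⟨y, x − y⟩
  = p(p−2) ∫₀¹ (1−θ)‖y + θ(x − y)‖^{p−4} ⟨y + θ(x − y), x − y⟩² dθ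
    + p‖x − y‖² ∫₀¹ (1−θ)‖y + θ(x − y)‖^{p−2} dθ`. -/
theorem norm_rpow_taylor_identity (d : ℕ) (hd : 0 < d) (p : ℝ) (hp : 4 < p)
    (x y : EuclideanSpace ℝ (Fin d)) :
    ‖x‖ ^ p - ‖y‖ ^ p - p * ‖y‖ ^ (p - 2) * ⟪y, x - y⟫ =
      p * (p - 2) *
        (∫ θ in (0:ℝ)..1,
          (1 - θ) * ‖y + θ • (x - y)‖ ^ (p - 4) * ⟪y + θ • (x - y), x - y⟫ ^ 2)
      + p * ‖x - y‖ ^ 2 *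
        ∫ θ in (0:ℝ)..1, (1 - θ) * ‖y + θ • (x - y)‖ ^ (p - 2) :=
  norm_rpow_taylor_identity_general d p hp x y
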